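/- For real k and angles θ₁, θ₂ with |c₁c₂ cos k + s₁s₂| ≤ 1, the eigenvalues of Û₁(k)Û₂(k) are λ_j(k) = c₁c₂ cos k + s₁s₂ - i(-1)^j √(1 - (c₁c₂ cos k + s₁s₂)²) for j = 1, 2, where cⱼ = cos θⱼ, sⱼ = sin θⱼ; in particular λ₁(k)·λ₂(k) = 1 and λ₂(k) is the complex conjugate of λ₁(k). -/

import Mathlib

/-! Each `Û(k)` has determinant `-1`, so `Û₁(k)Û₂(k)` has determinant `1`, and its trace is
`2A` with `A = c₁c₂ cos k + s₁s₂`. Hence its characteristic polynomial is `z² - 2Az + 1`, whose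
roots for `|A| ≤ 1` are the complex conjugates `A ± i√(1 - A²)` of modulus one. -/

noncomputable def Ucoin (θ : ℝ) : Matrix (Fin 2) (Fin 2) ℂ :=
  !![(Real.cos θ : ℂ), (Real.sin θ : ℂ); (Real.sin θ : ℂ), -(Real.cos θ : ℂ)]

noncomputable def Dmat (k : ℝ) : Matrix (Fin 2) (Fin 2) ℂ :=
  !![Complex.exp ((k : ℂ) / 2 * Complex.I), 0; 0, Complex.exp (-((k : ℂ) / 2) * Complex.I)]

noncomputable def hatU (θ k : ℝ) : Matrix (Fin 2) (Fin 2) ℂ := Dmat k * Ucoin θ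

/-- `A(k) = c₁c₂ cos k + s₁s₂`. -/
noncomputable def Aval (θ₁ θ₂ k : ℝ) : ℝ :=
  Real.cos θ₁ * Real.cos θ₂ * Real.cos k + Real.sin θ₁ * Real.sin θ₂

/-- `λ_j(k) = A(k) - i (-1)^j √(1 - A(k)²)`. -/
noncomputable def lam (θ₁ θ₂ k : ℝ) (j : ℕ) : ℂ :=
  (Aval θ₁ θ₂ k : ℂ) - Complex.I * (-1 : ℂ) ^ j * (Real.sqrt (1 - (Aval θ₁ θ₂ k) ^ 2) : ℂ)

theorem Matrix.spectrum_fin_two_eq_pair {K : Type*} [Field K] (M : Matrix (Fin 2) (Fin 2) K)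
    {a b : K} (htr : M.trace = a + b) (hdet : M.det = a * b) : spectrum K M = {a, b} := by
  ext z
  rw [Matrix.mem_spectrum_iff_isRoot_charpoly, M.charpoly_fin_two, htr, hdet]
  simp only [Polynomial.IsRoot.def, Polynomial.eval_add, Polynomial.eval_sub, Polynomial.eval_mul,
    Polynomial.eval_pow, Polynomial.eval_X, Polynomial.eval_C, Set.mem_insert_iff,
    Set.mem_singleton_iff]
  rw [show z ^ 2 - (a + b) * z + a * b = (z - a) * (z - b) by ring, mul_eq_zero, sub_eq_zero,
    sub_eq_zero]

open Complex

theorem exp_half_mul_I_mul_exp_neg_half_mul_I (k : ℝ) :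
    exp ((k : ℂ) / 2 * I) * exp (-((k : ℂ) / 2) * I) = 1 := by
  rw [← exp_add, neg_mul, add_neg_cancel, exp_zero]

theorem exp_half_mul_I_sq_add_exp_neg_half_mul_I_sq (k : ℝ) :
    exp ((k : ℂ) / 2 * I) ^ 2 + exp (-((k : ℂ) / 2) * I) ^ 2 = 2 * Real.cos k := by
  rw [← exp_nat_mul, ← exp_nat_mul, ofReal_cos, cos]
  ring_nf

theorem det_Dmat (k : ℝ) : (Dmat k).det = 1 := by
  rw [Dmat, Matrix.det_fin_two_of, mul_zero, sub_zero, exp_half_mul_I_mul_exp_neg_half_mul_I]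

theorem det_Ucoin (θ : ℝ) : (Ucoin θ).det = -1 := by
  have h : (Real.sin θ : ℂ) ^ 2 + (Real.cos θ : ℂ) ^ 2 = 1 := by
    exact_mod_cast Real.sin_sq_add_cos_sq θ
  rw [Ucoin, Matrix.det_fin_two_of]
  linear_combination -h

theorem det_hatU (θ k : ℝ) : (hatU θ k).det = -1 := by
  rw [hatU, Matrix.det_mul, det_Dmat, det_Ucoin, one_mul]

theorem trace_hatU_mul_hatU (θ₁ θ₂ k : ℝ) :
    (hatU θ₁ k * hatU θ₂ k).trace = 2 * Aval θ₁ θ₂ k := by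
  simp only [hatU, Dmat, Ucoin, Matrix.trace_fin_two, Matrix.mul_fin_two, Matrix.of_apply,
    Matrix.cons_val', Matrix.cons_val_zero, Matrix.cons_val_one, Matrix.empty_val',
    Matrix.cons_val_fin_one, Aval, ofReal_add, ofReal_mul]
  linear_combination (Real.cos θ₁ * Real.cos θ₂ : ℂ) * exp_half_mul_I_sq_add_exp_neg_half_mul_I_sq k
    + 2 * (Real.sin θ₁ * Real.sin θ₂ : ℂ) * exp_half_mul_I_mul_exp_neg_half_mul_I k

theorem lam_one (θ₁ θ₂ k : ℝ) :
    lam θ₁ θ₂ k 1 = Aval θ₁ θ₂ k + Real.sqrt (1 - Aval θ₁ θ₂ k ^ 2) * I := by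
  simp only [lam]; ring

theorem lam_two (θ₁ θ₂ k : ℝ) :
    lam θ₁ θ₂ k 2 = Aval θ₁ θ₂ k - Real.sqrt (1 - Aval θ₁ θ₂ k ^ 2) * I := by
  simp only [lam]; ring

theorem lam_two_eq_conj_lam_one (θ₁ θ₂ k : ℝ) :
    lam θ₁ θ₂ k 2 = starRingEnd ℂ (lam θ₁ θ₂ k 1) := by
  rw [lam_one, lam_two, map_add, map_mul, conj_ofReal, conj_ofReal, conj_I, mul_neg,
    ← sub_eq_add_neg]

theorem lam_one_add_lam_two (θ₁ θ₂ k : ℝ) : lam θ₁ θ₂ k 1 + lam θ₁ θ₂ k 2 = 2 * Aval θ₁ θ₂ k := by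
  rw [lam_one, lam_two]; ring

theorem lam_one_mul_lam_two {θ₁ θ₂ k : ℝ} (h : |Aval θ₁ θ₂ k| ≤ 1) :
    lam θ₁ θ₂ k 1 * lam θ₁ θ₂ k 2 = 1 := by
  have hsq : Aval θ₁ θ₂ k ^ 2 ≤ 1 := by rwa [sq_le_one_iff_abs_le_one]
  rw [lam_two_eq_conj_lam_one, mul_conj, lam_one, normSq_add_mul_I,
    Real.sq_sqrt (sub_nonneg.mpr hsq), add_sub_cancel, ofReal_one]

theorem stmt_3 (k θ₁ θ₂ : ℝ) (h : |Aval θ₁ θ₂ k| ≤ 1) :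
    spectrum ℂ (hatU θ₁ k * hatU θ₂ k) = {lam θ₁ θ₂ k 1, lam θ₁ θ₂ k 2} ∧
    lam θ₁ θ₂ k 1 * lam θ₁ θ₂ k 2 = 1 ∧
    lam θ₁ θ₂ k 2 = starRingEnd ℂ (lam θ₁ θ₂ k 1) := by
  have hprod := lam_one_mul_lam_two h
  refine ⟨Matrix.spectrum_fin_two_eq_pair _ ?_ ?_, hprod, lam_two_eq_conj_lam_one θ₁ θ₂ k⟩
  · rw [trace_hatU_mul_hatU, lam_one_add_lam_two]
  · rw [Matrix.det_mul, det_hatU, det_hatU, hprod, neg_one_mul, neg_neg]
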